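/- arXiv:2011.12044 — 3 statements merged into one kernel-verified Lean document; each statement's English description precedes it below -/
import Mathlib

section
/- Let θ > 0. There exist constants c > 0 and M > 0 such that for every real μ ≥ M, f_NB(⌈μ⌉, μ, θ) ≥ c/μ, where ⌈μ⌉ denotes the ceiling of μ. That is, the negative binomial probability mass function evaluated at (an integer near) its mean is bounded below by a constant multiple of 1/μ. -/
/-- Dirac delta at zero on the naturals. -/
noncomputable def delta0 (x : ℕ) : ℝ := if x = 0 then 1 else 0

/-- Negative binomial probability mass function with mean `μ` and dispersion `θ`. -/
noncomputable def fNB (x : ℕ) (μ θ : ℝ) : ℝ :=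
  Real.Gamma (x + θ) / (Real.Gamma (x + 1) * Real.Gamma θ) *
    (θ / (θ + μ)) ^ θ * (μ / (θ + μ)) ^ x

/-- Zero-inflated negative binomial probability mass function. -/
noncomputable def fZINB (x : ℕ) (μ θ π : ℝ) : ℝ :=
  π * delta0 x + (1 - π) * fNB x μ θ

/-- The logistic function. -/
noncomputable def logistic (t : ℝ) : ℝ := Real.exp t / (1 + Real.exp t)

open Real


lemma gautschi_aux {x s : ℝ} (hx : 0 < x) (hs0 : 0 ≤ s) (hs1 : s ≤ 1) :
    Real.Gamma (x + 1) ≤ Real.Gamma (x + s) * (x + s) ^ (1 - s) := by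
  rcases hs0.eq_or_lt with rfl | hs0'
  · rw [add_zero, sub_zero, Real.rpow_one, mul_comm, ← Real.Gamma_add_one hx.ne']
  rcases hs1.eq_or_lt with rfl | hs1'
  · rw [sub_self, Real.rpow_zero, mul_one]
  have hxs : 0 < x + s := by linarith
  have hxs1 : 0 < x + 1 + s := by linarith
  have h := Real.Gamma_mul_add_mul_le_rpow_Gamma_mul_rpow_Gamma hxs hxs1 hs0'
      (by linarith : (0:ℝ) < 1 - s) (by ring)
  have he : s * (x + s) + (1 - s) * (x + 1 + s) = x + 1 := by ring
  rw [he] at h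
  have hG1 : Real.Gamma (x + 1 + s) = (x + s) * Real.Gamma (x + s) := by
    rw [show x + 1 + s = (x + s) + 1 by ring, Real.Gamma_add_one hxs.ne']
  rw [hG1] at h
  have hGpos : 0 < Real.Gamma (x + s) := Real.Gamma_pos_of_pos hxs
  calc Real.Gamma (x+1)
      ≤ Real.Gamma (x+s) ^ s * ((x+s) * Real.Gamma (x+s)) ^ (1-s) := h
    _ = Real.Gamma (x+s) * (x+s) ^ (1-s) := by
        rw [Real.mul_rpow hxs.le hGpos.le, mul_comm ((x+s)^(1-s)) _, ← mul_assoc,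
          ← Real.rpow_add hGpos]
        norm_num

lemma gamma_ratio_lower (θ : ℝ) (hθ : 0 < θ) :
    ∃ c1 > 0, ∀ n : ℕ, 1 ≤ n →
      c1 * (n : ℝ) ^ (θ - 1) * Real.Gamma (n + 1) ≤ Real.Gamma (n + θ) := by
  set k := ⌊θ⌋₊ with hk
  set s := θ - k with hsdef
  have hs0 : 0 ≤ s := by
    have := Nat.floor_le hθ.le
    simp only [hsdef]; linarith
  have hs1 : s < 1 := by
    have := Nat.lt_floor_add_one θ
    simp only [hsdef]; linarith
  refine ⟨((k : ℝ) + 2) ^ (s - 1), Real.rpow_pos_of_pos (by positivity) _, fun n hn => ?_⟩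
  have hn1 : (1 : ℝ) ≤ (n : ℝ) := by exact_mod_cast hn
  have hnpos : (0:ℝ) < n := by linarith
  -- step 1 : n^m * Γ(n+1) ≤ Γ(n+1+m)
  have step1 : ∀ m : ℕ, (n:ℝ)^m * Real.Gamma ((n:ℝ)+1) ≤ Real.Gamma ((n:ℝ)+1+m) := by
    intro m
    induction m with
    | zero => simp
    | succ m ih =>
      have hpos : (0:ℝ) < (n:ℝ)+1+m := by positivity
      have h1 : Real.Gamma ((n:ℝ)+1+(m+1:ℕ)) = ((n:ℝ)+1+m) * Real.Gamma ((n:ℝ)+1+m) := by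
        rw [show ((n:ℝ)+1+(m+1:ℕ)) = ((n:ℝ)+1+m)+1 by push_cast; ring,
          Real.Gamma_add_one hpos.ne']
      rw [h1, pow_succ]
      have hG : 0 ≤ Real.Gamma ((n:ℝ)+1) := (Real.Gamma_pos_of_pos (by positivity)).le
      calc (n:ℝ)^m * (n:ℝ) * Real.Gamma ((n:ℝ)+1)
          = (n:ℝ) * ((n:ℝ)^m * Real.Gamma ((n:ℝ)+1)) := by ring
        _ ≤ ((n:ℝ)+1+m) * Real.Gamma ((n:ℝ)+1+m) := by
            apply mul_le_mul (by linarith) ih (by positivity)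
            positivity
  -- step 2 : gautschi at x = n+k
  have hxk : (0:ℝ) < (n:ℝ) + k := by positivity
  have hg := gautschi_aux hxk hs0 hs1.le
  have hGxs : 0 < Real.Gamma ((n:ℝ) + k + s) := Real.Gamma_pos_of_pos (by positivity)
  have hxks : (0:ℝ) < (n:ℝ) + k + s := by positivity
  -- Γ(n+k+s) ≥ Γ(n+k+1) * (n+k+s)^(s-1)
  have h2 : Real.Gamma ((n:ℝ)+k+1) * ((n:ℝ)+k+s) ^ (s-1) ≤ Real.Gamma ((n:ℝ)+k+s) := by
    have hp : (0:ℝ) < ((n:ℝ)+k+s) ^ (1-s) := Real.rpow_pos_of_pos hxks _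
    rw [show s - 1 = -(1-s) by ring, Real.rpow_neg hxks.le, ← div_eq_mul_inv,
      div_le_iff₀ hp]
    exact hg
  -- combine
  have h3 : (n:ℝ)^k * Real.Gamma ((n:ℝ)+1) * ((n:ℝ)+k+s) ^ (s-1)
      ≤ Real.Gamma ((n:ℝ)+k+s) := by
    refine le_trans ?_ h2
    apply mul_le_mul_of_nonneg_right ?_ (Real.rpow_pos_of_pos hxks _).le
    have := step1 k
    calc (n:ℝ)^k * Real.Gamma ((n:ℝ)+1) ≤ Real.Gamma ((n:ℝ)+1+k) := this
      _ = Real.Gamma ((n:ℝ)+k+1) := by ring_nf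
  -- bound (n+k+s)^(s-1) below by (k+2)^(s-1) * n^(s-1)
  have h4 : ((k:ℝ)+2) ^ (s-1) * (n:ℝ) ^ (s-1) ≤ ((n:ℝ)+k+s) ^ (s-1) := by
    rw [← Real.mul_rpow (by positivity) hnpos.le]
    apply Real.rpow_le_rpow_of_nonpos hxks ?_ (by linarith)
    nlinarith
  have hrw : (n:ℝ)^k * ((k:ℝ)+2) ^ (s-1) * (n:ℝ) ^ (s-1)
      = ((k:ℝ)+2) ^ (s-1) * (n:ℝ) ^ (θ-1) := by
    rw [← Real.rpow_natCast (n:ℝ) k, mul_right_comm, ← Real.rpow_add hnpos, mul_comm]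
    congr 2
    rw [hsdef]; ring
  have hfin : ((k:ℝ)+2) ^ (s-1) * (n:ℝ) ^ (θ-1) * Real.Gamma ((n:ℝ)+1)
      ≤ Real.Gamma ((n:ℝ)+k+s) := by
    rw [← hrw]
    calc (n:ℝ)^k * ((k:ℝ)+2) ^ (s-1) * (n:ℝ) ^ (s-1) * Real.Gamma ((n:ℝ)+1)
        ≤ (n:ℝ)^k * ((n:ℝ)+k+s) ^ (s-1) * Real.Gamma ((n:ℝ)+1) := by
          have hG : 0 ≤ Real.Gamma ((n:ℝ)+1) := (Real.Gamma_pos_of_pos (by positivity)).le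
          apply mul_le_mul_of_nonneg_right ?_ hG
          rw [mul_assoc]
          exact mul_le_mul_of_nonneg_left h4 (by positivity)
      _ = (n:ℝ)^k * Real.Gamma ((n:ℝ)+1) * ((n:ℝ)+k+s) ^ (s-1) := by ring
      _ ≤ Real.Gamma ((n:ℝ)+k+s) := h3
  have : (n:ℝ) + θ = (n:ℝ) + k + s := by rw [hsdef]; ring
  rw [this]
  exact hfin

theorem nb_at_mean_lower_bound
    (θ : ℝ) (hθ : 0 < θ) :
    ∃ c > 0, ∃ M > 0, ∀ μ : ℝ, M ≤ μ → c / μ ≤ fNB ⌈μ⌉₊ μ θ := by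
  obtain ⟨c1, hc1, hratio⟩ := gamma_ratio_lower θ hθ
  have hGθ : 0 < Real.Gamma θ := Real.Gamma_pos_of_pos hθ
  set c : ℝ := c1 * (θ ^ θ * (2:ℝ) ^ (-θ)) * Real.exp (-(2*θ)) / (2 * Real.Gamma θ) with hc
  have hθθ : 0 < θ ^ θ := rpow_pos_of_pos hθ _
  have h2θ : (0:ℝ) < (2:ℝ) ^ (-θ) := rpow_pos_of_pos two_pos _
  have hcpos : 0 < c := by positivity
  refine ⟨c, hcpos, max θ 1, lt_of_lt_of_le one_pos (le_max_right _ _), fun μ hμ => ?_⟩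
  have hμ1 : (1:ℝ) ≤ μ := le_trans (le_max_right _ _) hμ
  have hμθ : θ ≤ μ := le_trans (le_max_left _ _) hμ
  have hμpos : (0:ℝ) < μ := by linarith
  set n : ℕ := ⌈μ⌉₊ with hn
  have hn1 : 1 ≤ n := Nat.one_le_ceil_iff.mpr hμpos
  have hμn : μ ≤ (n:ℝ) := Nat.le_ceil μ
  have hnμ : (n:ℝ) ≤ μ + 1 := (Nat.ceil_lt_add_one hμpos.le).le
  have hn2μ : (n:ℝ) ≤ 2*μ := by linarith
  have hnpos : (0:ℝ) < (n:ℝ) := by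
    have : (1:ℝ) ≤ (n:ℝ) := by exact_mod_cast hn1
    linarith
  have hθμ : (0:ℝ) < θ + μ := by linarith
  have hGn1 : 0 < Real.Gamma ((n:ℝ)+1) := Real.Gamma_pos_of_pos (by positivity)
  have hμθ1 : 0 < μ ^ (θ-1) := rpow_pos_of_pos hμpos _
  have hμnθ : 0 < μ ^ (-θ) := rpow_pos_of_pos hμpos _
  -- factor A
  have hhalf : μ ^ (θ-1) / 2 ≤ (n:ℝ) ^ (θ-1) := by
    rcases le_or_gt 1 θ with h1 | h1
    · calc μ ^ (θ-1) / 2 ≤ μ ^ (θ-1) := by linarith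
        _ ≤ (n:ℝ) ^ (θ-1) := Real.rpow_le_rpow hμpos.le hμn (by linarith)
    · have h2 : (2*μ) ^ (θ-1) ≤ (n:ℝ) ^ (θ-1) :=
        Real.rpow_le_rpow_of_nonpos hnpos hn2μ (by linarith)
      have h3 : (2*μ) ^ (θ-1) = (2:ℝ) ^ (θ-1) * μ ^ (θ-1) :=
        Real.mul_rpow (by norm_num) hμpos.le
      have h4 : (2:ℝ)^(-1:ℝ) ≤ (2:ℝ)^(θ-1) :=
        Real.rpow_le_rpow_of_exponent_le one_le_two (by linarith)
      rw [Real.rpow_neg_one] at h4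
      calc μ ^ (θ-1) / 2 = 2⁻¹ * μ ^ (θ-1) := by ring
        _ ≤ (2:ℝ) ^ (θ-1) * μ ^ (θ-1) := mul_le_mul_of_nonneg_right h4 hμθ1.le
        _ = (2*μ) ^ (θ-1) := h3.symm
        _ ≤ (n:ℝ)^(θ-1) := h2
  have e1 : c1 * (n:ℝ)^(θ-1) / Real.Gamma θ
      ≤ Real.Gamma ((n:ℝ)+θ) / (Real.Gamma ((n:ℝ)+1) * Real.Gamma θ) := by
    rw [div_le_div_iff₀ hGθ (by positivity)]
    calc c1*(n:ℝ)^(θ-1)*(Real.Gamma ((n:ℝ)+1)*Real.Gamma θ)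
        = (c1*(n:ℝ)^(θ-1)*Real.Gamma ((n:ℝ)+1))*Real.Gamma θ := by ring
      _ ≤ Real.Gamma ((n:ℝ)+θ)*Real.Gamma θ :=
          mul_le_mul_of_nonneg_right (hratio n hn1) hGθ.le
  have hA : c1 * μ^(θ-1) / (2 * Real.Gamma θ)
      ≤ Real.Gamma ((n:ℝ)+θ) / (Real.Gamma ((n:ℝ)+1) * Real.Gamma θ) := by
    refine le_trans ?_ e1
    rw [show c1 * μ^(θ-1) / (2 * Real.Gamma θ) = c1 * (μ^(θ-1)/2) / Real.Gamma θ by ring]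
    gcongr
  -- factor B
  have hB : θ^θ * (2:ℝ)^(-θ) * μ^(-θ) ≤ (θ/(θ+μ))^θ := by
    rw [Real.div_rpow hθ.le hθμ.le]
    have h6 : (θ+μ)^θ ≤ (2*μ)^θ := Real.rpow_le_rpow hθμ.le (by linarith) hθ.le
    have h7 : (2*μ)^θ = (2:ℝ)^θ * μ^θ := Real.mul_rpow (by norm_num) hμpos.le
    have h8 : θ^θ/((2:ℝ)^θ*μ^θ) ≤ θ^θ/(θ+μ)^θ := by
      gcongr
      all_goals first
        | exact rpow_pos_of_pos hθμ _
        | (rw [← h7]; exact h6)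
    have h9 : θ^θ * (2:ℝ)^(-θ) * μ^(-θ) = θ^θ/((2:ℝ)^θ*μ^θ) := by
      rw [Real.rpow_neg (by norm_num : (0:ℝ) ≤ 2), Real.rpow_neg hμpos.le]
      ring
    rw [h9]; exact h8
  -- factor C
  have hq : (0:ℝ) < (θ+μ)/μ := by positivity
  have hC : Real.exp (-(2*θ)) ≤ (μ/(θ+μ))^n := by
    have h10 : (θ+μ)/μ ≤ Real.exp (θ/μ) := by
      have h := Real.add_one_le_exp (θ/μ)
      have he : (θ+μ)/μ = θ/μ + 1 := by field_simp
      linarith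
    have h11 : ((θ+μ)/μ)^n ≤ Real.exp (2*θ) := by
      calc ((θ+μ)/μ)^n ≤ (Real.exp (θ/μ))^n := pow_le_pow_left₀ hq.le h10 n
        _ = Real.exp ((n:ℝ)*(θ/μ)) := (Real.exp_nat_mul _ n).symm
        _ ≤ Real.exp (2*θ) := by
            rw [Real.exp_le_exp, mul_div_assoc', div_le_iff₀ hμpos]
            nlinarith
    have h12 : μ/(θ+μ) = ((θ+μ)/μ)⁻¹ := (inv_div _ _).symm
    rw [h12, inv_pow, Real.exp_neg]
    exact inv_anti₀ (pow_pos hq n) h11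
  -- combine
  have hpow : μ^(θ-1) * μ^(-θ) * μ = 1 := by
    rw [← Real.rpow_add hμpos, show θ-1 + -θ = -1 by ring, Real.rpow_neg_one]
    exact inv_mul_cancel₀ hμpos.ne'
  rw [div_le_iff₀ hμpos]
  calc c = c * (μ^(θ-1) * μ^(-θ) * μ) := by rw [hpow, mul_one]
    _ = (c1 * μ^(θ-1)/(2*Real.Gamma θ)) * (θ^θ*(2:ℝ)^(-θ)*μ^(-θ)) *
          Real.exp (-(2*θ)) * μ := by rw [hc]; ring
    _ ≤ (Real.Gamma ((n:ℝ)+θ)/(Real.Gamma ((n:ℝ)+1)*Real.Gamma θ)) *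
          ((θ/(θ+μ))^θ) * ((μ/(θ+μ))^n) * μ := by
        gcongr <;> first | exact hA | exact hB | exact hC | positivity
    _ = fNB n μ θ * μ := rfl
end

section
/- Fix y ∈ ℕ and μ > 0. The function θ ↦ ln f_NB(y, μ, θ) is differentiable at every θ > 0, with derivative equal to Ψ(y+θ) − Ψ(θ) + ln θ + 1 − ln(μ+θ) − (y+θ)/(μ+θ), where Ψ(t) denotes the derivative at t of the function s ↦ ln Γ(s) (the digamma function) and Γ is the real Gamma function. -/
/-- The digamma function: the derivative of `log ∘ Γ`. -/
noncomputable def digamma (t : ℝ) : ℝ := deriv (fun s : ℝ => Real.log (Real.Gamma s)) t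

/-!
For `θ > 0` every factor of `fNB y μ θ` is positive, so its logarithm splits as
`log Γ(y + θ) - log Γ(y + 1) - log Γ θ + θ (log θ - log (θ + μ)) + y (log μ - log (θ + μ))`,
and this holds on a neighbourhood of `θ`. The Gamma terms differentiate to digamma values and the
remaining terms are elementary.
-/

open Real

theorem hasDerivAt_log_Gamma {t : ℝ} (ht : ∀ m : ℕ, t ≠ -m) :
    HasDerivAt (fun s ↦ log (Gamma s)) (digamma t) t :=
  ((differentiableAt_Gamma ht).log (Gamma_ne_zero ht)).hasDerivAt

theorem hasDerivAt_log_Gamma_of_pos {t : ℝ} (ht : 0 < t) :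
    HasDerivAt (fun s ↦ log (Gamma s)) (digamma t) t :=
  hasDerivAt_log_Gamma fun m h ↦ by linarith [h ▸ ht, (m.cast_nonneg : (0 : ℝ) ≤ m)]

theorem log_fNB {μ θ : ℝ} (hμ : 0 < μ) (hθ : 0 < θ) (y : ℕ) :
    log (fNB y μ θ) = log (Gamma (y + θ)) - log (Gamma (y + 1)) - log (Gamma θ)
      + θ * (log θ - log (θ + μ)) + y * (log μ - log (θ + μ)) := by
  have hθμ : 0 < θ + μ := by linarith
  have hΓyθ := Gamma_pos_of_pos (show (0 : ℝ) < y + θ by positivity)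
  have hΓy1 := Gamma_pos_of_pos (show (0 : ℝ) < y + 1 by positivity)
  have hΓθ := Gamma_pos_of_pos hθ
  have hrpow : 0 < (θ / (θ + μ)) ^ θ := rpow_pos_of_pos (by positivity) θ
  rw [fNB, log_mul (by positivity) (by positivity), log_mul (by positivity) hrpow.ne',
    log_div hΓyθ.ne' (by positivity), log_mul hΓy1.ne' hΓθ.ne', log_rpow (by positivity),
    log_pow, log_div hθ.ne' hθμ.ne', log_div hμ.ne' hθμ.ne']
  ring

theorem hasDerivAt_log_Gamma_add_sub_log_Gamma (y : ℝ) {θ : ℝ} (hyθ : 0 < y + θ) (hθ : 0 < θ) :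
    HasDerivAt (fun t ↦ log (Gamma (y + t)) - log (Gamma t)) (digamma (y + θ) - digamma θ) θ :=
  ((hasDerivAt_log_Gamma_of_pos hyθ).comp_const_add y θ).sub (hasDerivAt_log_Gamma_of_pos hθ)

theorem hasDerivAt_mul_log_sub_add_mul_log_sub (y : ℝ) {μ θ : ℝ} (hθ : θ ≠ 0)
    (hθμ : θ + μ ≠ 0) :
    HasDerivAt (fun t ↦ t * (log t - log (t + μ)) + y * (log μ - log (t + μ)))
      (log θ - log (θ + μ) + 1 - (y + θ) / (θ + μ)) θ := by
  have hlog_add : HasDerivAt (fun t ↦ log (t + μ)) (θ + μ)⁻¹ θ :=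
    (hasDerivAt_log hθμ).comp_add_const θ μ
  refine (((hasDerivAt_id' θ).mul ((hasDerivAt_log hθ).sub hlog_add)).add
    (((hasDerivAt_const θ (log μ)).sub hlog_add).const_mul y)).congr_deriv ?_
  simp only [Pi.sub_apply]
  field_simp
  ring

theorem deriv_log_fNB_theta
    (y : ℕ) (μ : ℝ) (hμ : 0 < μ) (θ : ℝ) (hθ : 0 < θ) :
    HasDerivAt (fun t : ℝ => Real.log (fNB y μ t))
      (digamma ((y : ℝ) + θ) - digamma θ + Real.log θ + 1 - Real.log (μ + θ)
        - ((y : ℝ) + θ) / (μ + θ)) θ := by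
  have hθμ : 0 < θ + μ := by linarith
  have h := ((hasDerivAt_log_Gamma_add_sub_log_Gamma y (by positivity) hθ).sub_const
    (log (Gamma (y + 1)))).add (hasDerivAt_mul_log_sub_add_mul_log_sub y hθ.ne' hθμ.ne')
  refine (h.congr_of_eventuallyEq ?_).congr_deriv ?_
  · filter_upwards [Ioi_mem_nhds hθ] with t ht
    rw [log_fNB hμ ht, Pi.add_apply]
    ring
  · rw [add_comm μ θ]
    ring
end

section
/- For every μ > 0 and θ > 0, the family (f_NB(x, μ, θ))_{x ∈ ℕ} has sum 1; equivalently, Σ_{x=0}^∞ Γ(x+θ)/(Γ(x+1)·Γ(θ)) · (μ/(θ+μ))^x = ((θ+μ)/θ)^θ, where the exponent θ is a real power and Γ is the real Gamma function. -/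
/-!
Up to the factor `(θ / (θ + μ)) ^ θ`, the negative binomial weights are the coefficients of the
binomial series of `(1 - p) ^ (-θ)` at `p = μ / (θ + μ) ∈ (0, 1)`: the generalized binomial
coefficient `Ring.choose (θ + n - 1) n` is the rising factorial `θ (θ + 1) ⋯ (θ + n - 1)` over `n!`,
which the functional equation of `Γ` turns into `Γ (n + θ) / (Γ (n + 1) Γ θ)`. Since
`1 - p = θ / (θ + μ)`, the weights sum to `1`.
-/

theorem Real.Gamma_add_nat_div_Gamma_eq {θ : ℝ} (hθ : ∀ k : ℕ, θ ≠ -k) (n : ℕ) :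
    Real.Gamma (θ + n) / Real.Gamma θ = (ascPochhammer ℝ n).eval θ := by
  induction n with
  | zero => simpa using Real.Gamma_ne_zero fun k => hθ k
  | succ n ih =>
    have hθn : θ + n ≠ 0 := fun h => hθ n (by linarith)
    rw [ascPochhammer_succ_eval, ← ih, Nat.cast_succ, ← add_assoc, Real.Gamma_add_one hθn]
    ring

theorem Real.choose_add_sub_one_eq_Gamma_div {θ : ℝ} (hθ : ∀ k : ℕ, θ ≠ -k) (n : ℕ) :
    Ring.choose (θ + n - 1) n = Real.Gamma (n + θ) / (Real.Gamma (n + 1) * Real.Gamma θ) := by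
  have h := Ring.factorial_nsmul_multichoose_eq_ascPochhammer θ n
  rw [Ring.multichoose_eq, Polynomial.ascPochhammer_smeval_eq_eval, nsmul_eq_mul] at h
  rw [Real.Gamma_nat_eq_factorial, add_comm (n : ℝ) θ, mul_comm, ← div_div,
    Real.Gamma_add_nat_div_Gamma_eq hθ, ← h]
  field_simp [Nat.factorial_ne_zero]

theorem Real.hasSum_Gamma_div_mul_pow {θ p : ℝ} (hθ : ∀ k : ℕ, θ ≠ -k) (hp : |p| < 1) :
    HasSum (fun n : ℕ => Real.Gamma (n + θ) / (Real.Gamma (n + 1) * Real.Gamma θ) * p ^ n)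
      (1 / (1 - p) ^ θ) := by
  have h := (Real.one_div_one_sub_rpow_hasFPowerSeriesOnBall_zero θ).hasSum
    (y := p) (by simpa [enorm_eq_nnnorm, ← NNReal.coe_lt_coe] using hp)
  simpa only [FormalMultilinearSeries.ofScalars_apply_eq, smul_eq_mul, zero_add,
    Real.choose_add_sub_one_eq_Gamma_div hθ] using h

theorem fNB_hasSum_one
    (μ θ : ℝ) (hμ : 0 < μ) (hθ : 0 < θ) :
    HasSum (fun x : ℕ => fNB x μ θ) 1 ∧
    ∑' x : ℕ, Real.Gamma ((x : ℝ) + θ) / (Real.Gamma ((x : ℝ) + 1) * Real.Gamma θ) *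
      (μ / (θ + μ)) ^ x = ((θ + μ) / θ) ^ θ := by
  have hθμ : 0 < θ + μ := by linarith
  have hq : 0 < θ / (θ + μ) := by positivity
  have hθ_ne : ∀ k : ℕ, θ ≠ -k := fun k => by linarith [(k.cast_nonneg : (0 : ℝ) ≤ k)]
  have hp : |μ / (θ + μ)| < 1 := by
    rw [abs_of_pos (by positivity), div_lt_one hθμ]
    linarith
  have h_one_sub : 1 - μ / (θ + μ) = θ / (θ + μ) := by field_simp; ring
  have hsum := Real.hasSum_Gamma_div_mul_pow hθ_ne hp
  rw [h_one_sub] at hsum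
  constructor
  · have h := hsum.mul_right ((θ / (θ + μ)) ^ θ)
    rw [one_div, inv_mul_cancel₀ (Real.rpow_pos_of_pos hq θ).ne'] at h
    exact h.congr_fun fun x => by rw [fNB]; ring
  · rw [hsum.tsum_eq, one_div, ← Real.inv_rpow hq.le, inv_div]
end
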